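/- arXiv:2010.15196 — 4 statements merged into one kernel-verified Lean document; each statement's English description precedes it below -/
import Mathlib

section
/- Let A and B be n×n Hermitian positive semidefinite complex matrices such that A - B is positive semidefinite. Then det(I + A) and det(I + B) are positive real numbers and 0 ≤ log det(I + A) - log det(I + B) ≤ log det(I + (A - B)). -/
/-!
Write `A - B = Xᴴ X` and `P = 1 + B`. The matrix determinant lemma gives
`det (1 + A) = det P * det (1 + X P⁻¹ Xᴴ)`. The second factor is at least `1`, which is the lower
bound; since `P⁻¹ ⪯ 1` it is at most `det (1 + X Xᴴ) = det (1 + (A - B))`, which is the upper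
bound. Both comparisons are instances of `det P ≤ det (P + D)` for `P ≻ 0`, `D ⪰ 0`, which follows
from the determinant lemma again and `1 ≤ det (1 + S) = ∏ (1 + λᵢ)` for `S ⪰ 0`.
-/

open scoped ComplexOrder

namespace Matrix

variable {n 𝕜 : Type*} [Fintype n] [DecidableEq n] [RCLike 𝕜]

open scoped MatrixOrder in
lemma PosSemidef.exists_eq_conjTranspose_mul_self {A : Matrix n n 𝕜} (hA : A.PosSemidef) :
    ∃ X : Matrix n n 𝕜, A = Xᴴ * X :=
  ⟨CFC.sqrt A, by
    rw [(nonneg_iff_posSemidef.mp (CFC.sqrt_nonneg A)).1.eq, CFC.sqrt_mul_sqrt_self A hA.nonneg]⟩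

lemma PosSemidef.one_le_det_one_add {S : Matrix n n 𝕜} (hS : S.PosSemidef) :
    1 ≤ (1 + S).det := by
  have hdet : (1 + S).det = ∏ i, ((1 + hS.1.eigenvalues i : ℝ) : 𝕜) := by
    set U : Matrix n n 𝕜 := (hS.1.eigenvectorUnitary : Matrix n n 𝕜)
    have hU : U * star U = 1 := Unitary.coe_mul_star_self _
    have hUU : star U * U = 1 := Unitary.coe_star_mul_self _
    set D : Matrix n n 𝕜 := diagonal (RCLike.ofReal ∘ hS.1.eigenvalues)
    have hS' : 1 + S = U * (1 + D) * star U := by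
      rw [mul_add, add_mul, mul_one, hU, hS.1.spectral_theorem, Unitary.conjStarAlgAut_apply]
    rw [hS', det_mul_comm, ← mul_assoc, hUU, one_mul, ← diagonal_one, diagonal_add, det_diagonal]
    simp
  rw [hdet, ← RCLike.ofReal_prod, ← RCLike.ofReal_one, RCLike.ofReal_le_ofReal]
  exact Finset.one_le_prod fun i _ => le_add_of_nonneg_right (hS.eigenvalues_nonneg i)

lemma PosDef.det_le_det_add {P D : Matrix n n 𝕜} (hP : P.PosDef) (hD : D.PosSemidef) :
    P.det ≤ (P + D).det := by
  obtain ⟨X, rfl⟩ := hD.exists_eq_conjTranspose_mul_self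
  have hF : (X * P⁻¹ * Xᴴ).PosSemidef := hP.inv.posSemidef.mul_mul_conjTranspose_same X
  rw [det_add_mul Xᴴ X hP.det_pos.ne'.isUnit]
  calc P.det = P.det * 1 := (mul_one _).symm
    _ ≤ P.det * (1 + X * P⁻¹ * Xᴴ).det :=
      mul_le_mul_of_nonneg_left hF.one_le_det_one_add hP.det_pos.le

lemma PosSemidef.one_sub_inv_one_add {B : Matrix n n 𝕜} (hB : B.PosSemidef) :
    (1 - (1 + B)⁻¹).PosSemidef := by
  have hP : (1 + B).PosDef := PosDef.one.add_posSemidef hB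
  set Q := (1 + B)⁻¹
  have hQP : Q * (1 + B) = 1 := nonsing_inv_mul _ hP.det_pos.ne'.isUnit
  have hPQ : (1 + B) * Q = 1 := mul_nonsing_inv _ hP.det_pos.ne'.isUnit
  have hQ : 1 - Q = Qᴴ * (B + Bᴴ * B) * Q := by
    rw [hP.inv.1.eq, hB.1.eq]
    calc 1 - Q = Q * (1 + B) - Q := by rw [hQP]
      _ = Q * B * ((1 + B) * Q) := by rw [hPQ]; noncomm_ring
      _ = Q * (B + B * B) * Q := by noncomm_ring
  rw [hQ]
  exact (hB.add (posSemidef_conjTranspose_mul_self B)).conjTranspose_mul_mul_same Q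

lemma PosSemidef.det_one_add_add_le {B D : Matrix n n 𝕜} (hB : B.PosSemidef) (hD : D.PosSemidef) :
    (1 + (B + D)).det ≤ (1 + B).det * (1 + D).det := by
  obtain ⟨X, rfl⟩ := hD.exists_eq_conjTranspose_mul_self
  have hP : (1 + B).PosDef := PosDef.one.add_posSemidef hB
  have hF : (X * (1 + B)⁻¹ * Xᴴ).PosSemidef := hP.inv.posSemidef.mul_mul_conjTranspose_same X
  have hG : (X * (1 - (1 + B)⁻¹) * Xᴴ).PosSemidef :=
    hB.one_sub_inv_one_add.mul_mul_conjTranspose_same X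
  have hFG : 1 + X * (1 + B)⁻¹ * Xᴴ + X * (1 - (1 + B)⁻¹) * Xᴴ = 1 + X * Xᴴ := by noncomm_ring
  calc (1 + (B + Xᴴ * X)).det = (1 + B).det * (1 + X * (1 + B)⁻¹ * Xᴴ).det := by
        rw [← add_assoc, det_add_mul _ _ hP.det_pos.ne'.isUnit]
    _ ≤ (1 + B).det * (1 + X * Xᴴ).det :=
        mul_le_mul_of_nonneg_left (hFG ▸ (PosDef.one.add_posSemidef hF).det_le_det_add hG)
          hP.det_pos.le
    _ = (1 + B).det * (1 + Xᴴ * X).det := by rw [det_one_add_mul_comm]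

end Matrix

theorem stmt_0_general {n : ℕ} (A B : Matrix (Fin n) (Fin n) ℂ)
    (hB : B.PosSemidef) (hAB : (A - B).PosSemidef) :
    (0 < (1 + A).det.re ∧ (1 + A).det.im = 0) ∧
    (0 < (1 + B).det.re ∧ (1 + B).det.im = 0) ∧
    0 ≤ Real.log (1 + A).det.re - Real.log (1 + B).det.re ∧
    Real.log (1 + A).det.re - Real.log (1 + B).det.re ≤
      Real.log (1 + (A - B)).det.re := by
  obtain ⟨hb, hbim⟩ : 1 ≤ (1 + B).det.re ∧ 0 = (1 + B).det.im :=
    Complex.le_def.mp hB.one_le_det_one_add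
  have hc : 1 ≤ (1 + (A - B)).det.re := (Complex.le_def.mp hAB.one_le_det_one_add).1
  obtain ⟨hmono, hBAim⟩ : (1 + B).det.re ≤ (1 + A).det.re ∧ (1 + B).det.im = (1 + A).det.im := by
    have h := (Matrix.PosDef.one.add_posSemidef hB).det_le_det_add hAB
    rwa [add_assoc, add_sub_cancel, Complex.le_def] at h
  have hsub : (1 + A).det.re ≤ (1 + B).det.re * (1 + (A - B)).det.re := by
    have h := hB.det_one_add_add_le hAB
    rw [add_sub_cancel] at h
    simpa only [Complex.mul_re, ← hbim, zero_mul, sub_zero] using (Complex.le_def.mp h).1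
  have hb0 : 0 < (1 + B).det.re := by linarith
  have hc0 : 0 < (1 + (A - B)).det.re := by linarith
  refine ⟨⟨by linarith, hBAim ▸ hbim.symm⟩, ⟨hb0, hbim.symm⟩, ?_, ?_⟩
  · exact sub_nonneg.2 (Real.log_le_log hb0 hmono)
  · rw [sub_le_iff_le_add', ← Real.log_mul hb0.ne' hc0.ne']
    exact Real.log_le_log (by linarith) hsub

/-- Log-determinant inequality for Hermitian positive semidefinite complex matrices
with `A - B` positive semidefinite:
`det (I + A)` and `det (I + B)` are positive reals and
`0 ≤ log det (I + A) - log det (I + B) ≤ log det (I + (A - B))`. -/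
theorem stmt_0 {n : ℕ} (A B : Matrix (Fin n) (Fin n) ℂ)
    (hA : A.PosSemidef) (hB : B.PosSemidef) (hAB : (A - B).PosSemidef) :
    (0 < (1 + A).det.re ∧ (1 + A).det.im = 0) ∧
    (0 < (1 + B).det.re ∧ (1 + B).det.im = 0) ∧
    0 ≤ Real.log (1 + A).det.re - Real.log (1 + B).det.re ∧
    Real.log (1 + A).det.re - Real.log (1 + B).det.re ≤
      Real.log (1 + (A - B)).det.re :=
  stmt_0_general A B hB hAB
end

section
/- Let F̂ ∈ ℝ^{d×n}, let Γ ∈ ℝ^{n×n} be symmetric positive semidefinite with symmetric positive semidefinite square root Γ^{1/2} (so Γ = Γ^{1/2} Γ^{1/2}), and set H_d = F̂ Γ F̂ᵀ ∈ ℝ^{d×d}. Let H_d = Σ_{i=1}^d λ_i u_i u_iᵀ be a spectral decomposition with orthonormal eigenvectors u_1, …, u_d and eigenvalues λ_1 ≥ λ_2 ≥ ⋯ ≥ λ_d ≥ 0, and for 1 ≤ k ≤ d define the rank-k truncation Ĥ_d = Σ_{i=1}^k λ_i u_i u_iᵀ. Let W ∈ ℝ^{r×d} be a design matrix. Define Ψ(W)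 = (1/2) log det(I_n + Γ^{1/2} F̂ᵀ Wᵀ W F̂ Γ^{1/2}) and Ψ̂(W) = (1/2) log det(I_r + W Ĥ_d Wᵀ). Then 0 ≤ Ψ(W) − Ψ̂(W) ≤ (1/2) Σ_{i=k+1}^d log(1 + λ_i). -/
/-!
Sylvester's identity `det (1 + X * Y) = det (1 + Y * X)` turns `Ψ` into
`½ log det (1 + W Ĥ Wᵀ + W R Wᵀ)`, where `R = H_d - Ĥ_d` is the discarded spectral tail.
For positive semidefinite `A, B`, writing `B = S * S` and `P = 1 + A` gives
`det (1 + A + B) = det P * det (1 + S P⁻¹ S)` with `0 ≤ S P⁻¹ S ≤ B`; hence `det (1 + ·)` is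
monotone and submultiplicative on PSD matrices, which yields both bounds once
`det (1 + W R Wᵀ) ≤ det (1 + R) = ∏_{i ≥ k} (1 + λ_i)`. That last inequality holds because a
design matrix has orthonormal rows, so `Wᵀ W ≤ 1`.
-/

open Matrix Finset

namespace Matrix

variable {m ι : Type*} [Fintype m]

theorem det_one_add_mul_diagonal_mul_transpose [DecidableEq m] [Fintype ι] [DecidableEq ι]
    {R : Type*} [CommRing R] {U : Matrix m ι R} (hU : Uᵀ * U = 1) (c : ι → R) :
    det (1 + U * diagonal c * Uᵀ) = ∏ i, (1 + c i) := by
  rw [det_one_add_mul_comm, ← Matrix.mul_assoc, hU, Matrix.one_mul, ← diagonal_one,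
    diagonal_add, det_diagonal]

section

variable [DecidableEq m]

theorem IsHermitian.det_one_add {A : Matrix m m ℝ} (hA : A.IsHermitian) :
    det (1 + A) = ∏ i, (1 + hA.eigenvalues i) := by
  conv_lhs => rw [hA.spectral_theorem, Unitary.conjStarAlgAut_apply, star_eq_conjTranspose,
    conjTranspose_eq_transpose_of_trivial]
  rw [det_one_add_mul_diagonal_mul_transpose]
  · rfl
  · rw [← conjTranspose_eq_transpose_of_trivial, ← star_eq_conjTranspose]
    exact Unitary.coe_star_mul_self hA.eigenvectorUnitary

theorem PosSemidef.one_le_det_one_add_s1 {A : Matrix m m ℝ} (hA : A.PosSemidef) :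
    1 ≤ det (1 + A) := by
  rw [hA.isHermitian.det_one_add]
  exact Finset.one_le_prod fun i _ => le_add_of_nonneg_right (hA.eigenvalues_nonneg i)

theorem PosSemidef.det_one_add_pos {A : Matrix m m ℝ} (hA : A.PosSemidef) :
    0 < det (1 + A) :=
  zero_lt_one.trans_le hA.one_le_det_one_add_s1

open scoped MatrixOrder in
theorem PosSemidef.exists_isSymm_mul_self_eq {B : Matrix m m ℝ} (hB : B.PosSemidef) :
    ∃ S : Matrix m m ℝ, S.IsSymm ∧ S * S = B := by
  refine ⟨CFC.sqrt B, ?_, CFC.sqrt_mul_sqrt_self B hB.nonneg⟩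
  rw [IsSymm, ← conjTranspose_eq_transpose_of_trivial]
  exact (CFC.sqrt_nonneg B).posSemidef.isHermitian

theorem PosSemidef.posSemidef_one_sub_inv_one_add {A : Matrix m m ℝ} (hA : A.PosSemidef) :
    (1 - (1 + A)⁻¹).PosSemidef := by
  set P := 1 + A
  have hP : IsUnit P.det := hA.det_one_add_pos.ne'.isUnit
  have hPsymm : (P⁻¹)ᵀ = P⁻¹ := by
    rw [← conjTranspose_eq_transpose_of_trivial]
    exact (PosDef.one.add_posSemidef hA).inv.isHermitian
  have h : 1 - P⁻¹ = P⁻¹ * (A + A * A) * P⁻¹ := by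
    rw [show A + A * A = A * P by simp [P, mul_add], ← Matrix.mul_assoc,
      Matrix.mul_assoc _ P, mul_nonsing_inv P hP, Matrix.mul_one,
      show A = P - 1 by simp [P], Matrix.mul_sub, nonsing_inv_mul P hP, Matrix.mul_one]
  have hAA : (A + A * A).PosSemidef := hA.add (by simpa [pow_two] using hA.pow 2)
  simpa [h, hPsymm] using hAA.mul_mul_conjTranspose_same P⁻¹

theorem PosSemidef.exists_det_one_add_add_eq {A B : Matrix m m ℝ} (hA : A.PosSemidef)
    (hB : B.PosSemidef) :
    ∃ X : Matrix m m ℝ, X.PosSemidef ∧ (B - X).PosSemidef ∧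
      det (1 + A + B) = det (1 + A) * det (1 + X) := by
  obtain ⟨S, hS, hSS⟩ := hB.exists_isSymm_mul_self_eq
  set P := 1 + A
  have hP : IsUnit P.det := hA.det_one_add_pos.ne'.isUnit
  refine ⟨S * P⁻¹ * S, ?_, ?_, ?_⟩
  · simpa [hS.eq] using (PosDef.one.add_posSemidef hA).inv.posSemidef.mul_mul_conjTranspose_same S
  · have h : B - S * P⁻¹ * S = S * (1 - P⁻¹) * S := by
      rw [Matrix.mul_sub, Matrix.sub_mul, Matrix.mul_one, hSS]
    simpa [h, hS.eq] using hA.posSemidef_one_sub_inv_one_add.mul_mul_conjTranspose_same S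
  · have h : 1 + A + B = P * (1 + P⁻¹ * S * S) := by
      rw [Matrix.mul_add, Matrix.mul_one, Matrix.mul_assoc, ← Matrix.mul_assoc P,
        mul_nonsing_inv P hP, Matrix.one_mul, hSS]
    rw [h, det_mul, det_one_add_mul_comm (P⁻¹ * S) S, ← Matrix.mul_assoc]

theorem PosSemidef.det_one_add_le_det_one_add_add {A B : Matrix m m ℝ} (hA : A.PosSemidef)
    (hB : B.PosSemidef) : det (1 + A) ≤ det (1 + A + B) := by
  obtain ⟨X, hX, -, h⟩ := hA.exists_det_one_add_add_eq hB
  rw [h]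
  exact le_mul_of_one_le_right hA.det_one_add_pos.le hX.one_le_det_one_add_s1

theorem PosSemidef.det_one_add_add_le_mul {A B : Matrix m m ℝ} (hA : A.PosSemidef)
    (hB : B.PosSemidef) : det (1 + A + B) ≤ det (1 + A) * det (1 + B) := by
  obtain ⟨X, hX, hBX, h⟩ := hA.exists_det_one_add_add_eq hB
  have hXB : det (1 + X) ≤ det (1 + B) := by
    simpa using hX.det_one_add_le_det_one_add_add hBX
  rw [h]
  exact mul_le_mul_of_nonneg_left hXB hA.det_one_add_pos.le

theorem PosSemidef.log_det_one_add_le_log_det_one_add_add {A B : Matrix m m ℝ}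
    (hA : A.PosSemidef) (hB : B.PosSemidef) :
    Real.log (det (1 + A)) ≤ Real.log (det (1 + A + B)) :=
  Real.log_le_log hA.det_one_add_pos (hA.det_one_add_le_det_one_add_add hB)

theorem PosSemidef.log_det_one_add_add_le {A B : Matrix m m ℝ}
    (hA : A.PosSemidef) (hB : B.PosSemidef) :
    Real.log (det (1 + A + B)) ≤ Real.log (det (1 + A)) + Real.log (det (1 + B)) := by
  rw [← Real.log_mul hA.det_one_add_pos.ne' hB.det_one_add_pos.ne']
  exact Real.log_le_log (by simpa [add_assoc] using (hA.add hB).det_one_add_pos)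
    (hA.det_one_add_add_le_mul hB)

end

theorem mul_transpose_self_eq_one_of_zero_one [Fintype ι] [DecidableEq ι] {W : Matrix ι m ℝ}
    (h01 : ∀ i j, W i j = 0 ∨ W i j = 1) (hrow : ∀ i, ∑ j, W i j = 1)
    (hcol : ∀ j, ∑ i, W i j = 0 ∨ ∑ i, W i j = 1) : W * Wᵀ = 1 := by
  have hnonneg : ∀ i j, 0 ≤ W i j := fun i j => by rcases h01 i j with h | h <;> simp [h]
  ext i i'
  rw [mul_apply]
  by_cases hii' : i = i'
  · subst hii'
    rw [one_apply_eq, ← hrow i]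
    exact Finset.sum_congr rfl fun j _ => by rcases h01 i j with h | h <;> simp [h]
  · rw [one_apply_ne hii']
    refine Finset.sum_eq_zero fun j _ => ?_
    -- two ones in column `j` would give it column sum at least `2`
    rcases h01 i j with h | h
    · simp [h]
    rcases h01 i' j with h' | h'
    · simp [h']
    have h2 : W i j + W i' j ≤ ∑ l, W l j := by
      rw [← Finset.sum_pair hii' (f := fun l => W l j)]
      exact Finset.sum_le_sum_of_subset_of_nonneg (Finset.subset_univ _)
        fun l _ _ => hnonneg l j
    rcases hcol j with hc | hc <;> linarith

section

variable [DecidableEq m] [Fintype ι] [DecidableEq ι]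

theorem posSemidef_one_sub_transpose_mul_self_of_mul_transpose_eq_one {W : Matrix ι m ℝ}
    (hW : W * Wᵀ = 1) :
    (1 - Wᵀ * W).PosSemidef := by
  have hP : (1 - Wᵀ * W) = (1 - Wᵀ * W)ᵀ * (1 - Wᵀ * W) := by
    have hidem : Wᵀ * W * (Wᵀ * W) = Wᵀ * W := by
      rw [Matrix.mul_assoc, ← Matrix.mul_assoc W, hW, Matrix.one_mul]
    simp only [transpose_sub, transpose_one, transpose_mul, transpose_transpose, Matrix.sub_mul,
      Matrix.mul_sub, Matrix.one_mul, Matrix.mul_one, hidem, sub_self, sub_zero]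
  rw [hP, ← conjTranspose_eq_transpose_of_trivial]
  exact posSemidef_conjTranspose_mul_self _

theorem PosSemidef.det_one_add_mul_mul_transpose_le {B : Matrix m m ℝ} (hB : B.PosSemidef)
    {W : Matrix ι m ℝ} (hW : (1 - Wᵀ * W).PosSemidef) :
    det (1 + W * B * Wᵀ) ≤ det (1 + B) := by
  obtain ⟨S, hS, rfl⟩ := hB.exists_isSymm_mul_self_eq
  have hsyl : det (1 + W * (S * S) * Wᵀ) = det (1 + S * (Wᵀ * W) * S) := by
    rw [show W * (S * S) * Wᵀ = (W * S) * (S * Wᵀ) by simp only [Matrix.mul_assoc],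
      det_one_add_mul_comm]
    simp only [Matrix.mul_assoc]
  have hWW : (S * (Wᵀ * W) * S).PosSemidef := by
    simpa [hS.eq] using (posSemidef_conjTranspose_mul_self W).mul_mul_conjTranspose_same S
  have hrest : (S * (1 - Wᵀ * W) * S).PosSemidef := by
    simpa [hS.eq] using hW.mul_mul_conjTranspose_same S
  calc det (1 + W * (S * S) * Wᵀ) = det (1 + S * (Wᵀ * W) * S) := hsyl
    _ ≤ det (1 + S * (Wᵀ * W) * S + S * (1 - Wᵀ * W) * S) :=
      hWW.det_one_add_le_det_one_add_add hrest
    _ = det (1 + S * S) := by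
      rw [Matrix.mul_sub, Matrix.sub_mul, Matrix.mul_one, add_assoc, add_sub_cancel]

end

theorem posSemidef_sum_smul_vecMulVec_self {s : Finset ι} {c : ι → ℝ}
    (hc : ∀ i ∈ s, 0 ≤ c i) (u : ι → m → ℝ) :
    (∑ i ∈ s, c i • vecMulVec (u i) (u i)).PosSemidef :=
  posSemidef_sum s fun i hi => by
    simpa using (posSemidef_vecMulVec_self_star (u i)).smul (hc i hi)

theorem det_one_add_sum_smul_vecMulVec_self [DecidableEq m] [DecidableEq ι] {s : Finset ι}
    {u : ι → m → ℝ} (hu : ∀ i ∈ s, ∀ j ∈ s, u i ⬝ᵥ u j = if i = j then 1 else 0)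
    (c : ι → ℝ) :
    det (1 + ∑ i ∈ s, c i • vecMulVec (u i) (u i)) = ∏ i ∈ s, (1 + c i) := by
  set U : Matrix m s ℝ := of fun a i => u i a
  have hU : Uᵀ * U = 1 := by
    ext i j
    have := hu i i.2 j j.2
    simp only [dotProduct, ← Subtype.ext_iff] at this
    simpa [U, mul_apply, one_apply] using this
  have hsum :
      ∑ i ∈ s, c i • vecMulVec (u i) (u i) = U * diagonal (fun i : s => c i) * Uᵀ := by
    rw [← Finset.sum_coe_sort s]
    ext a b
    rw [mul_apply]
    simp [U, Matrix.sum_apply, vecMulVec_apply, mul_comm, mul_left_comm]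
  rw [hsum, det_one_add_mul_diagonal_mul_transpose hU, ← Finset.prod_coe_sort s]

end Matrix

theorem stmt_1_general {d n r : ℕ} (F : Matrix (Fin d) (Fin n) ℝ)
    (Γ Γh : Matrix (Fin n) (Fin n) ℝ)
    (hΓsq : Γ = Γh * Γh)
    (lam : Fin d → ℝ) (u : Fin d → (Fin d → ℝ))
    (h_orth : ∀ i j, u i ⬝ᵥ u j = if i = j then 1 else 0)
    (h_nonneg : ∀ i, 0 ≤ lam i)
    (h_spec : F * Γ * Fᵀ = ∑ i, lam i • vecMulVec (u i) (u i))
    (k : ℕ)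
    (W : Matrix (Fin r) (Fin d) ℝ)
    (hW01 : ∀ i j, W i j = 0 ∨ W i j = 1)
    (hWrow : ∀ i, ∑ j, W i j = 1)
    (hWcol : ∀ j, (∑ i, W i j) = 0 ∨ (∑ i, W i j) = 1) :
    0 ≤ (1 / 2) * Real.log (1 + Γh * Fᵀ * Wᵀ * W * F * Γh).det -
        (1 / 2) * Real.log
          (1 + W * (∑ i ∈ univ.filter fun i : Fin d => (i : ℕ) < k,
              lam i • vecMulVec (u i) (u i)) * Wᵀ).det ∧
    (1 / 2) * Real.log (1 + Γh * Fᵀ * Wᵀ * W * F * Γh).det -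
        (1 / 2) * Real.log
          (1 + W * (∑ i ∈ univ.filter fun i : Fin d => (i : ℕ) < k,
              lam i • vecMulVec (u i) (u i)) * Wᵀ).det ≤
      (1 / 2) * ∑ i ∈ univ.filter fun i : Fin d => k ≤ (i : ℕ),
          Real.log (1 + lam i) := by
  set Hk := ∑ i ∈ univ.filter fun i : Fin d => (i : ℕ) < k, lam i • vecMulVec (u i) (u i)
  set R := ∑ i ∈ univ.filter fun i : Fin d => k ≤ (i : ℕ), lam i • vecMulVec (u i) (u i)
  have hR : R.PosSemidef := posSemidef_sum_smul_vecMulVec_self (fun i _ => h_nonneg i) u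
  have hWHk : (W * Hk * Wᵀ).PosSemidef := by
    simpa using (posSemidef_sum_smul_vecMulVec_self (fun i _ => h_nonneg i) u)
      |>.mul_mul_conjTranspose_same W
  have hWR : (W * R * Wᵀ).PosSemidef := by simpa using hR.mul_mul_conjTranspose_same W
  have hdet :
      det (1 + Γh * Fᵀ * Wᵀ * W * F * Γh) = det (1 + W * Hk * Wᵀ + W * R * Wᵀ) := by
    have hsplit : F * Γ * Fᵀ = Hk + R := by
      rw [h_spec, ← sum_filter_add_sum_filter_not univ fun i : Fin d => (i : ℕ) < k]
      simp only [not_lt, Hk, R]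
    rw [show Γh * Fᵀ * Wᵀ * W * F * Γh = (Γh * Fᵀ * Wᵀ) * (W * F * Γh) by
        simp only [Matrix.mul_assoc], det_one_add_mul_comm,
      show W * F * Γh * (Γh * Fᵀ * Wᵀ) = W * (F * Γ * Fᵀ) * Wᵀ by
        simp only [hΓsq, Matrix.mul_assoc], hsplit, Matrix.mul_add, Matrix.add_mul, add_assoc]
  have htail : Real.log (det (1 + W * R * Wᵀ)) ≤
      ∑ i ∈ univ.filter fun i : Fin d => k ≤ (i : ℕ), Real.log (1 + lam i) := by
    rw [← Real.log_prod fun i _ => by linarith [h_nonneg i],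
      ← det_one_add_sum_smul_vecMulVec_self fun i _ j _ => h_orth i j]
    exact Real.log_le_log hWR.det_one_add_pos <| hR.det_one_add_mul_mul_transpose_le <|
      posSemidef_one_sub_transpose_mul_self_of_mul_transpose_eq_one <|
        mul_transpose_self_eq_one_of_zero_one hW01 hWrow hWcol
  rw [hdet]
  constructor
  · linarith [hWHk.log_det_one_add_le_log_det_one_add_add hWR]
  · linarith [hWHk.log_det_one_add_add_le hWR]

/-- Low-rank approximation error bound for the expected information gain:
`0 ≤ Ψ(W) - Ψ̂(W) ≤ (1/2) ∑_{i ≥ k} log (1 + λ_i)`. -/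
theorem stmt_1 {d n r : ℕ} (F : Matrix (Fin d) (Fin n) ℝ)
    (Γ Γh : Matrix (Fin n) (Fin n) ℝ)
    (hΓ : Γ.PosSemidef) (hΓh : Γh.PosSemidef) (hΓsq : Γ = Γh * Γh)
    (lam : Fin d → ℝ) (u : Fin d → (Fin d → ℝ))
    (h_orth : ∀ i j, u i ⬝ᵥ u j = if i = j then 1 else 0)
    (h_decay : ∀ i j : Fin d, i ≤ j → lam j ≤ lam i)
    (h_nonneg : ∀ i, 0 ≤ lam i)
    (h_spec : F * Γ * Fᵀ = ∑ i, lam i • vecMulVec (u i) (u i))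
    (k : ℕ) (hk1 : 1 ≤ k) (hkd : k ≤ d)
    (W : Matrix (Fin r) (Fin d) ℝ)
    (hW01 : ∀ i j, W i j = 0 ∨ W i j = 1)
    (hWrow : ∀ i, ∑ j, W i j = 1)
    (hWcol : ∀ j, (∑ i, W i j) = 0 ∨ (∑ i, W i j) = 1) :
    0 ≤ (1 / 2) * Real.log (1 + Γh * Fᵀ * Wᵀ * W * F * Γh).det -
        (1 / 2) * Real.log
          (1 + W * (∑ i ∈ univ.filter fun i : Fin d => (i : ℕ) < k,
              lam i • vecMulVec (u i) (u i)) * Wᵀ).det ∧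
    (1 / 2) * Real.log (1 + Γh * Fᵀ * Wᵀ * W * F * Γh).det -
        (1 / 2) * Real.log
          (1 + W * (∑ i ∈ univ.filter fun i : Fin d => (i : ℕ) < k,
              lam i • vecMulVec (u i) (u i)) * Wᵀ).det ≤
      (1 / 2) * ∑ i ∈ univ.filter fun i : Fin d => k ≤ (i : ℕ),
          Real.log (1 + lam i) :=
  stmt_1_general F Γ Γh hΓsq lam u h_orth h_nonneg h_spec k W hW01 hWrow hWcol
end

section
/- Let U ∈ ℝ^{d×p} have orthonormal columns (Uᵀ U = I_p), let Σ ∈ ℝ^{p×p} be diagonal with nonnegative diagonal entries σ_1, …, σ_p, and let M ∈ ℝ^{r×d} satisfy Mᵀ M ⪯ I_d (i.e., I_d − Mᵀ M is positive semidefinite). Then det(I_r + M U Σ Uᵀ Mᵀ) ≤ det(I_p + Σ) = ∏_{i=1}^p (1 + σ_i), and hence log det(I_r + M U Σ Uᵀ Mᵀ) ≤ Σ_{i=1}^p log(1 + σ_i). -/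
/-!
Write `A = M U`, so that `Aᵀ A ⪯ 1`, and let `R = Σ^{1/2}`. Sylvester's identity gives
`det (1 + A Σ Aᵀ) = det (1 + R Aᵀ A R)`, and conjugating `Aᵀ A ⪯ 1` by `R` gives
`R Aᵀ A R ⪯ Σ`. The determinant is monotone in the Loewner order on positive definite
matrices: if `0 < P ⪯ Q`, then `1 ⪯ P^{-1/2} Q P^{-1/2}`, all of whose eigenvalues are `≥ 1`.
-/

open Matrix
open scoped MatrixOrder

namespace Matrix

variable {m n : Type*} [Fintype m] [Fintype n] [DecidableEq m] [DecidableEq n]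

theorem one_le_det_of_one_le {A : Matrix n n ℝ} (hA : 1 ≤ A) : 1 ≤ A.det := by
  have hA' : A.IsHermitian := by
    simpa using (le_iff.mp hA).isHermitian.add isHermitian_one
  rw [hA'.det_eq_prod_eigenvalues]
  refine Finset.one_le_prod fun i _ ↦
    sub_nonneg.mp <| spectrum_nonneg_of_nonneg (sub_nonneg.mpr hA) ?_
  rw [← map_one (algebraMap ℝ (Matrix n n ℝ)), ← spectrum.sub_singleton_eq]
  exact Set.sub_mem_sub (hA'.eigenvalues_mem_spectrum_real i) rfl

theorem det_le_det_of_le {A B : Matrix n n ℝ} (hA : A.PosDef) (hAB : A ≤ B) :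
    A.det ≤ B.det := by
  set R := CFC.sqrt A
  have hRR : R * R = A := CFC.sqrt_mul_sqrt_self A hA.posSemidef.nonneg
  have hR : IsUnit R.det :=
    (isUnit_iff_isUnit_det R).mp ((CFC.isUnit_sqrt_iff A hA.posSemidef.nonneg).mpr hA.isUnit)
  have hRinv : star R⁻¹ = R⁻¹ := by
    rw [star_eq_conjTranspose, conjTranspose_nonsing_inv, ← star_eq_conjTranspose,
      (CFC.sqrt_nonneg A).isSelfAdjoint.star_eq]
  have hC : 1 ≤ R⁻¹ * B * R⁻¹ := by
    have := star_left_conjugate_le_conjugate hAB R⁻¹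
    rwa [hRinv, ← hRR, ← Matrix.mul_assoc, nonsing_inv_mul _ hR, Matrix.one_mul,
      mul_nonsing_inv _ hR] at this
  have hB : B.det = A.det * (R⁻¹ * B * R⁻¹).det := by
    rw [← hRR, det_mul, det_mul, det_mul, det_nonsing_inv, Ring.inverse_eq_inv']
    field_simp [hR.ne_zero]
  rw [hB]
  exact le_mul_of_one_le_right hA.det_pos.le (one_le_det_of_one_le hC)

theorem det_one_add_mul_mul_transpose_le {A : Matrix m n ℝ} (hA : Aᵀ * A ≤ 1)
    {S : Matrix n n ℝ} (hS : 0 ≤ S) : (1 + A * S * Aᵀ).det ≤ (1 + S).det := by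
  set R := CFC.sqrt S
  have hRR : R * R = S := CFC.sqrt_mul_sqrt_self S hS
  have hR : Rᵀ = R := by
    rw [← conjTranspose_eq_transpose_of_trivial, ← star_eq_conjTranspose]
    exact (CFC.sqrt_nonneg S).isSelfAdjoint.star_eq
  have hsylvester : (1 + A * S * Aᵀ).det = (1 + R * (Aᵀ * A) * R).det := by
    rw [← hRR, ← Matrix.mul_assoc, Matrix.mul_assoc (A * R), det_one_add_mul_comm]
    simp only [Matrix.mul_assoc]
  have hle : R * (Aᵀ * A) * R ≤ S := by
    simpa only [star_eq_conjTranspose, conjTranspose_eq_transpose_of_trivial, hR, Matrix.mul_one,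
      hRR] using star_left_conjugate_le_conjugate hA R
  have hpos : (1 + R * (Aᵀ * A) * R).PosDef := by
    refine PosDef.one.add_posSemidef ?_
    simpa only [conjTranspose_eq_transpose_of_trivial, hR] using
      (posSemidef_conjTranspose_mul_self A).conjTranspose_mul_mul_same R
  rw [hsylvester]
  exact det_le_det_of_le hpos (add_le_add_right hle 1)

end Matrix

/-- Key determinant estimate: for `U` with orthonormal columns, `Σ` diagonal
nonnegative, and `Mᵀ M ⪯ I`, one has
`det (I + M U Σ Uᵀ Mᵀ) ≤ det (I + Σ) = ∏ (1 + σ_i)` and the log version. -/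
theorem stmt_4 {d p r : ℕ} (U : Matrix (Fin d) (Fin p) ℝ) (hU : Uᵀ * U = 1)
    (σ : Fin p → ℝ) (hσ : ∀ i, 0 ≤ σ i)
    (M : Matrix (Fin r) (Fin d) ℝ) (hM : (1 - Mᵀ * M).PosSemidef) :
    (1 + M * U * diagonal σ * Uᵀ * Mᵀ).det ≤ (1 + diagonal σ).det ∧
    (1 + diagonal σ).det = ∏ i, (1 + σ i) ∧
    Real.log (1 + M * U * diagonal σ * Uᵀ * Mᵀ).det ≤
      ∑ i, Real.log (1 + σ i) := by
  have hMU : (M * U)ᵀ * (M * U) ≤ 1 := by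
    rw [le_iff, ← hU]
    simpa [Matrix.mul_sub, Matrix.sub_mul, Matrix.mul_assoc] using hM.conjTranspose_mul_mul_same U
  have hS : 0 ≤ diagonal σ := (PosSemidef.diagonal hσ).nonneg
  have hconj : M * U * diagonal σ * Uᵀ * Mᵀ = M * U * diagonal σ * (M * U)ᵀ := by
    simp only [transpose_mul, Matrix.mul_assoc]
  have hdet := hconj ▸ det_one_add_mul_mul_transpose_le hMU hS
  have hprod : (1 + diagonal σ).det = ∏ i, (1 + σ i) := by
    rw [← diagonal_one, diagonal_add, det_diagonal]
  have hpos : 0 < (1 + M * U * diagonal σ * Uᵀ * Mᵀ).det := by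
    refine one_pos.trans_le (one_le_det_of_one_le (le_add_of_nonneg_right ?_))
    rw [hconj]
    exact (hS.posSemidef.mul_mul_conjTranspose_same (M * U)).nonneg
  refine ⟨hdet, hprod, ?_⟩
  rw [← Real.log_prod fun i _ ↦ by linarith [hσ i], ← hprod]
  exact Real.log_le_log hpos hdet
end

section
/- Let Γ ∈ ℝ^{n×n} be symmetric positive definite with symmetric positive definite square root Γ^{1/2}, let H ∈ ℝ^{n×n} be symmetric positive semidefinite, and define the posterior covariance Γ_post = (H + Γ⁻¹)⁻¹. Let λ_1, …, λ_n be the eigenvalues (with multiplicity) of the prior-preconditioned matrix H̃ = Γ^{1/2} H Γ^{1/2}. Then trace(Γ_post H) = Σ_{j=1}^n λ_j / (1 + λ_j). -/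
open Matrix

/-- Trace term of the Gaussian KL divergence:
`trace (Γ_post H) = ∑ λ_j / (1 + λ_j)` where `Γ_post = (H + Γ⁻¹)⁻¹` and the
`λ_j` are the eigenvalues of the prior-preconditioned Hessian `Γ^{1/2} H Γ^{1/2}`. -/
theorem stmt_8 {n : ℕ} (Γ Γh H : Matrix (Fin n) (Fin n) ℝ)
    (hΓ : Γ.PosDef) (hΓh : Γh.PosDef) (hΓsq : Γ = Γh * Γh)
    (hH : H.PosSemidef)
    (lam : Fin n → ℝ) (u : Fin n → (Fin n → ℝ))
    (h_orth : ∀ i j, u i ⬝ᵥ u j = if i = j then 1 else 0)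
    (h_spec : Γh * H * Γh = ∑ i, lam i • vecMulVec (u i) (u i)) :
    ((H + Γ⁻¹)⁻¹ * H).trace = ∑ j, lam j / (1 + lam j) := by
  classical
  set U : Matrix (Fin n) (Fin n) ℝ := Matrix.of (fun i j => u j i) with hU
  -- orthogonality of U
  have hUtU : Uᵀ * U = 1 := by
    ext i j
    simpa [hU, Matrix.mul_apply, Matrix.one_apply, dotProduct, mul_comm] using h_orth i j
  have hUUt : U * Uᵀ = 1 := mul_eq_one_comm.mp hUtU
  -- spectral decomposition in U * D * Uᵀ form
  have hM : Γh * H * Γh = U * Matrix.diagonal lam * Uᵀ := by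
    rw [h_spec]
    ext a b
    simp [Matrix.sum_apply, Matrix.mul_apply, Matrix.diagonal, hU, vecMulVec,
      Finset.sum_mul, mul_comm, mul_left_comm]
  -- the diagonal matrix equals Uᵀ M U
  have hD : Matrix.diagonal lam = Uᵀ * (Γh * H * Γh) * U := by
    rw [hM]
    have : Uᵀ * (U * Matrix.diagonal lam * Uᵀ) * U
        = (Uᵀ * U) * Matrix.diagonal lam * (Uᵀ * U) := by noncomm_ring
    rw [this, hUtU, Matrix.one_mul, Matrix.mul_one]
  -- M is PosSemidef, hence the eigenvalues are nonnegative
  have hMps : (Γh * H * Γh).PosSemidef := by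
    have := hH.conjTranspose_mul_mul_same Γh
    rwa [hΓh.isHermitian.eq] at this
  have hDps : (Matrix.diagonal lam).PosSemidef := by
    rw [hD]
    have := hMps.conjTranspose_mul_mul_same U
    simpa using this
  have hlam : ∀ j, 0 ≤ lam j := Matrix.posSemidef_diagonal_iff.mp hDps
  have hpos : ∀ j, (0:ℝ) < 1 + lam j := fun j => by linarith [hlam j]
  -- Γh is invertible
  have hΓhdet : IsUnit Γh.det := isUnit_iff_ne_zero.mpr hΓh.det_pos.ne'
  have hΓhl : Γh⁻¹ * Γh = 1 := Matrix.nonsing_inv_mul Γh hΓhdet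
  have hΓhr : Γh * Γh⁻¹ = 1 := Matrix.mul_nonsing_inv Γh hΓhdet
  have hΓinv : Γ⁻¹ = Γh⁻¹ * Γh⁻¹ := by rw [hΓsq, Matrix.mul_inv_rev]
  -- explicit inverse of H + Γ⁻¹
  set P : Matrix (Fin n) (Fin n) ℝ := U * Matrix.diagonal (fun j => (1 + lam j)⁻¹) * Uᵀ with hP
  set N : Matrix (Fin n) (Fin n) ℝ := Γh * P * Γh with hN
  have hMP : (Γh * H * Γh + 1) * P = 1 := by
    rw [hM, hP]
    have e1 : (U * Matrix.diagonal lam * Uᵀ + 1) * (U * Matrix.diagonal (fun j => (1 + lam j)⁻¹) * Uᵀ)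
        = U * (Matrix.diagonal lam * ((Uᵀ * U) * Matrix.diagonal (fun j => (1 + lam j)⁻¹))) * Uᵀ
          + U * Matrix.diagonal (fun j => (1 + lam j)⁻¹) * Uᵀ := by noncomm_ring
    rw [e1, hUtU, Matrix.one_mul, Matrix.diagonal_mul_diagonal]
    have e2 : U * Matrix.diagonal (fun j => lam j * (1 + lam j)⁻¹) * Uᵀ
          + U * Matrix.diagonal (fun j => (1 + lam j)⁻¹) * Uᵀ
        = U * (Matrix.diagonal (fun j => lam j * (1 + lam j)⁻¹)
          + Matrix.diagonal (fun j => (1 + lam j)⁻¹)) * Uᵀ := by noncomm_ring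
    rw [e2, Matrix.diagonal_add]
    have e3 : (fun j => lam j * (1 + lam j)⁻¹ + (1 + lam j)⁻¹) = fun _ => (1:ℝ) := by
      funext j
      have h := (hpos j).ne'
      field_simp
      ring
    rw [e3, Matrix.diagonal_one, Matrix.mul_one, hUUt]
  have hinv : (H + Γ⁻¹) * N = 1 := by
    have key : (H + Γ⁻¹) * N = Γh⁻¹ * ((Γh * H * Γh + 1) * P) * Γh := by
      rw [hΓinv, hN]
      have h1 : H * (Γh * P * Γh) = Γh⁻¹ * ((Γh * H * Γh) * P) * Γh := by
        calc H * (Γh * P * Γh) = (Γh⁻¹ * Γh) * (H * (Γh * P * Γh)) := by rw [hΓhl, Matrix.one_mul]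
          _ = Γh⁻¹ * ((Γh * H * Γh) * P) * Γh := by noncomm_ring
      have h2 : (Γh⁻¹ * Γh⁻¹) * (Γh * P * Γh) = Γh⁻¹ * (1 * P) * Γh := by
        calc (Γh⁻¹ * Γh⁻¹) * (Γh * P * Γh) = Γh⁻¹ * ((Γh⁻¹ * Γh) * P) * Γh := by noncomm_ring
          _ = Γh⁻¹ * (1 * P) * Γh := by rw [hΓhl]
      rw [Matrix.add_mul, h1, h2, Matrix.add_mul]
      noncomm_ring
    rw [key, hMP, Matrix.mul_one, hΓhl]
  have hpostinv : (H + Γ⁻¹)⁻¹ = N := Matrix.inv_eq_right_inv hinv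
  -- compute the trace
  rw [hpostinv, hN]
  have hassoc : Γh * P * Γh * H = Γh * (P * (Γh * H)) := by noncomm_ring
  rw [hassoc, Matrix.trace_mul_comm]
  have hPM : P * (Γh * H) * Γh = U * Matrix.diagonal (fun j => (1 + lam j)⁻¹ * lam j) * Uᵀ := by
    have : P * (Γh * H) * Γh = P * (Γh * H * Γh) := by noncomm_ring
    rw [this, hM, hP]
    calc (U * Matrix.diagonal (fun j => (1 + lam j)⁻¹) * Uᵀ) * (U * Matrix.diagonal lam * Uᵀ)
        = U * (Matrix.diagonal (fun j => (1 + lam j)⁻¹) * ((Uᵀ * U) * Matrix.diagonal lam)) * Uᵀ := by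
          noncomm_ring
      _ = U * Matrix.diagonal (fun j => (1 + lam j)⁻¹ * lam j) * Uᵀ := by
          rw [hUtU, Matrix.one_mul, Matrix.diagonal_mul_diagonal, Matrix.mul_assoc]
  rw [hPM, Matrix.mul_assoc, Matrix.trace_mul_comm U, Matrix.mul_assoc, hUtU, Matrix.mul_one,
    Matrix.trace_diagonal]
  refine Finset.sum_congr rfl fun j _ => ?_
  rw [div_eq_inv_mul]
end
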